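/- arXiv:1601.07279 — 3 statements merged into one kernel-verified Lean document; each statement's English description precedes it below -/
import Mathlib

section
/- Adding a reward transformation of the form b ↦ [(I - γ(T^a)ᵀ)g]ᵀ b to the reward function leaves the fixed point policy of the Bellman equation unchanged: if V* satisfies V*(b) = max_a [ρ(b,a) + γ ∑_z η(z|b,a) V*(τ(b,a,z))], then V̲(b) := V*(b) + gᵀb satisfies V̲(b) = max_a [ρ̲(b,a) + γ ∑_z η(z|b,a) V̲(τ(b,a,z))] where ρ̲(b,a) = ρ(b,a) + [(I - γ(T^a)ᵀ)g]ᵀ b, and the argmax sets coincide at every b. -/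
/-- membership in the probability simplex -/
def IsPMF {S : ℕ} (b : Fin S → ℝ) : Prop :=
  (∀ i, 0 ≤ b i) ∧ ∑ i, b i = 1

/-! The shaping term `gᵀb - γ gᵀ(Tᵃ b)` telescopes against the potential `gᵀτ` carried into the
next belief: averaged over observations, the Bayes updates `τ(b,a,z)` recombine to the predicted
belief `Tᵃ b`, so the transformed `Q`-values are the original ones shifted by `gᵀb`, a constant in
the action. Hence the maximum shifts by the same constant and the maximizing actions agree. -/

section BayesUpdate

variable {ι κ : Type*} [Fintype ι]

noncomputable def obsLikelihood (O : κ → ι → ℝ) (p : ι → ℝ) (z : κ) : ℝ :=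
  ∑ s, O z s * p s

noncomputable def bayesUpdate (O : κ → ι → ℝ) (p : ι → ℝ) (z : κ) (s : ι) : ℝ :=
  O z s * p s / obsLikelihood O p z

variable {O : κ → ι → ℝ} {p : ι → ℝ}

/-- The division in `bayesUpdate` is harmless: an observation of likelihood zero has
`O z s * p s = 0` for every state. -/
theorem obsLikelihood_mul_bayesUpdate (hO : ∀ z s, 0 ≤ O z s) (hp : ∀ s, 0 ≤ p s)
    (z : κ) (s : ι) : obsLikelihood O p z * bayesUpdate O p z s = O z s * p s := by
  by_cases hz : obsLikelihood O p z = 0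
  · have hterm : O z s * p s = 0 :=
      (Finset.sum_eq_zero_iff_of_nonneg fun s _ => mul_nonneg (hO z s) (hp s)).mp hz s
        (Finset.mem_univ s)
    rw [hz, hterm, zero_mul]
  · exact mul_div_cancel₀ _ hz

theorem sum_obsLikelihood_mul_bayesUpdate [Fintype κ] (hO : ∀ z s, 0 ≤ O z s)
    (hO1 : ∀ s, ∑ z, O z s = 1) (hp : ∀ s, 0 ≤ p s) (s : ι) :
    ∑ z, obsLikelihood O p z * bayesUpdate O p z s = p s := by
  simp only [obsLikelihood_mul_bayesUpdate hO hp, ← Finset.sum_mul, hO1, one_mul]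

theorem sum_obsLikelihood_mul_dotProduct_bayesUpdate [Fintype κ] (hO : ∀ z s, 0 ≤ O z s)
    (hO1 : ∀ s, ∑ z, O z s = 1) (hp : ∀ s, 0 ≤ p s) (g : ι → ℝ) :
    ∑ z, obsLikelihood O p z * ∑ s, g s * bayesUpdate O p z s = ∑ s, g s * p s := by
  simp only [Finset.mul_sum, mul_left_comm (obsLikelihood O p _)]
  rw [Finset.sum_comm]
  simp only [← Finset.mul_sum, sum_obsLikelihood_mul_bayesUpdate hO hO1 hp]

end BayesUpdate

theorem sum_vecMul_mul_eq_sum_mul_mulVec {ι κ : Type*} [Fintype ι] [Fintype κ] (T : κ → ι → ℝ)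
    (g : κ → ℝ) (b : ι → ℝ) :
    ∑ i, (∑ j, T j i * g j) * b i = ∑ j, g j * ∑ i, T j i * b i := by
  simp only [Finset.sum_mul, Finset.mul_sum]
  rw [Finset.sum_comm]
  exact Finset.sum_congr rfl fun j _ => Finset.sum_congr rfl fun i _ => by ring

theorem reward_transformation_preserves_policy_general {S A Z : ℕ} (hA : 0 < A)
    (γ : ℝ)
    -- transition model T a s' s, column-stochastic; observation model O a z s'
    (T : Fin A → Fin S → Fin S → ℝ)
    (hT0 : ∀ a s' s, 0 ≤ T a s' s)
    (O : Fin A → Fin Z → Fin S → ℝ)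
    (hO0 : ∀ a z s', 0 ≤ O a z s') (hO1 : ∀ a s', ∑ z, O a z s' = 1)
    (ρ : (Fin S → ℝ) → Fin A → ℝ) (g : Fin S → ℝ)
    -- predicted belief, observation likelihood, Bayes update
    (pred : (Fin S → ℝ) → Fin A → Fin S → ℝ)
    (hpred : ∀ b a s', pred b a s' = ∑ s, T a s' s * b s)
    (η : (Fin S → ℝ) → Fin A → Fin Z → ℝ)
    (hη : ∀ b a z, η b a z = ∑ s', O a z s' * pred b a s')
    (τ : (Fin S → ℝ) → Fin A → Fin Z → Fin S → ℝ)
    (hτ : ∀ b a z s', τ b a z s' = O a z s' * pred b a s' / η b a z)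
    -- the original and transformed Q-values and rewards
    (V : (Fin S → ℝ) → ℝ)
    (Q : (Fin S → ℝ) → Fin A → ℝ)
    (hQ : ∀ b a, Q b a = ρ b a + γ * ∑ z, η b a z * V (τ b a z))
    (ρl : (Fin S → ℝ) → Fin A → ℝ)
    (hρl : ∀ b a, ρl b a =
      ρ b a + ∑ i, (g i - γ * ∑ j, T a j i * g j) * b i)
    (Vl : (Fin S → ℝ) → ℝ)
    (hVl : ∀ b, Vl b = V b + ∑ i, g i * b i)
    (Ql : (Fin S → ℝ) → Fin A → ℝ)
    (hQl : ∀ b a, Ql b a = ρl b a + γ * ∑ z, η b a z * Vl (τ b a z))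
    -- V* satisfies the Bellman fixed point equation
    (hfix : ∀ b, IsPMF b →
      V b = Finset.univ.sup' ⟨⟨0, hA⟩, Finset.mem_univ _⟩ (fun a => Q b a)) :
    ∀ b, IsPMF b →
      (Vl b = Finset.univ.sup' ⟨⟨0, hA⟩, Finset.mem_univ _⟩ (fun a => Ql b a)) ∧
      (∀ a : Fin A, Q b a = V b ↔ Ql b a = Vl b) := by
  intro b hb
  have hQl_eq (a : Fin A) : Ql b a = Q b a + ∑ i, g i * b i := by
    have hη' : η b a = obsLikelihood (O a) (pred b a) := funext (hη b a)
    have hτ' : τ b a = bayesUpdate (O a) (pred b a) := by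
      ext z s; rw [hτ, hη]; rfl
    have hpred0 (s : Fin S) : 0 ≤ pred b a s := by
      rw [hpred]; exact Finset.sum_nonneg fun s' _ => mul_nonneg (hT0 a s s') (hb.1 s')
    have hpotential : ∑ z, η b a z * ∑ i, g i * τ b a z i = ∑ i, (∑ j, T a j i * g j) * b i := by
      rw [hη', hτ', sum_obsLikelihood_mul_dotProduct_bayesUpdate (hO0 a) (hO1 a) hpred0,
        sum_vecMul_mul_eq_sum_mul_mulVec]
      simp only [hpred]
    simp only [hQl, hρl, hQ, hVl, mul_add, Finset.sum_add_distrib, hpotential, sub_mul,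
      Finset.sum_sub_distrib, mul_assoc, ← Finset.mul_sum]
    ring
  refine ⟨?_, fun a => by rw [hQl_eq, hVl, add_left_inj]⟩
  rw [hVl, hfix b hb]
  exact (Finset.sup'_add _ _ _ _).trans (Finset.sup'_congr _ rfl fun a _ => (hQl_eq a).symm)

theorem reward_transformation_preserves_policy {S A Z : ℕ} (hA : 0 < A)
    (γ : ℝ) (hγ0 : 0 ≤ γ) (hγ1 : γ < 1)
    -- transition model T a s' s, column-stochastic; observation model O a z s'
    (T : Fin A → Fin S → Fin S → ℝ)
    (hT0 : ∀ a s' s, 0 ≤ T a s' s) (hT1 : ∀ a s, ∑ s', T a s' s = 1)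
    (O : Fin A → Fin Z → Fin S → ℝ)
    (hO0 : ∀ a z s', 0 ≤ O a z s') (hO1 : ∀ a s', ∑ z, O a z s' = 1)
    (ρ : (Fin S → ℝ) → Fin A → ℝ) (g : Fin S → ℝ)
    -- predicted belief, observation likelihood, Bayes update
    (pred : (Fin S → ℝ) → Fin A → Fin S → ℝ)
    (hpred : ∀ b a s', pred b a s' = ∑ s, T a s' s * b s)
    (η : (Fin S → ℝ) → Fin A → Fin Z → ℝ)
    (hη : ∀ b a z, η b a z = ∑ s', O a z s' * pred b a s')
    (τ : (Fin S → ℝ) → Fin A → Fin Z → Fin S → ℝ)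
    (hτ : ∀ b a z s', τ b a z s' = O a z s' * pred b a s' / η b a z)
    -- the original and transformed Q-values and rewards
    (V : (Fin S → ℝ) → ℝ)
    (Q : (Fin S → ℝ) → Fin A → ℝ)
    (hQ : ∀ b a, Q b a = ρ b a + γ * ∑ z, η b a z * V (τ b a z))
    (ρl : (Fin S → ℝ) → Fin A → ℝ)
    (hρl : ∀ b a, ρl b a =
      ρ b a + ∑ i, (g i - γ * ∑ j, T a j i * g j) * b i)
    (Vl : (Fin S → ℝ) → ℝ)
    (hVl : ∀ b, Vl b = V b + ∑ i, g i * b i)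
    (Ql : (Fin S → ℝ) → Fin A → ℝ)
    (hQl : ∀ b a, Ql b a = ρl b a + γ * ∑ z, η b a z * Vl (τ b a z))
    -- V* satisfies the Bellman fixed point equation
    (hfix : ∀ b, IsPMF b →
      V b = Finset.univ.sup' ⟨⟨0, hA⟩, Finset.mem_univ _⟩ (fun a => Q b a)) :
    ∀ b, IsPMF b →
      (Vl b = Finset.univ.sup' ⟨⟨0, hA⟩, Finset.mem_univ _⟩ (fun a => Ql b a)) ∧
      (∀ a : Fin A, Q b a = V b ↔ Ql b a = Vl b) :=
  reward_transformation_preserves_policy_general hA γ T hT0 O hO0 hO1 ρ g pred hpred η hη τ hτ V Q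
    hQ ρl hρl Vl hVl Ql hQl hfix
end

section
/- If the matrix of linear constraints (∂ρ/∂b)|_{b₀}·K + [(I - γ(T^a)ᵀ)g]ᵀ·K ≥ 0 holds componentwise for all actions a, where K is the bidiagonal matrix with 1 on the diagonal and -1 on the superdiagonal, then the transformed reward ρ̲(b,a) = ρ(b,a) + [(I-γ(T^a)ᵀ)g]ᵀb has nonnegative directional derivatives in all MLR-increasing directions at b₀; in particular, on the two-state simplex, a linear reward ρ(b,a) = rₐᵀb with the constraint satisfied globally implies ρ̲(·,a) is monotone increasing in b(2). -/
lemma sum_mul_bidiagonal_col_one (φ : Fin 2 → ℝ) :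
    ∑ i, φ i * !![(1 : ℝ), -1; 0, 1] i 1 = φ 1 - φ 0 := by
  simp only [Fin.sum_univ_two, Matrix.of_apply, Matrix.cons_val', Matrix.cons_val_zero,
    Matrix.cons_val_one, Matrix.empty_val', Matrix.cons_val_fin_one]
  ring

lemma monotone_linear_two_state {φ : Fin 2 → ℝ} (h : φ 0 ≤ φ 1) :
    Monotone fun p : ℝ => φ 0 * (1 - p) + φ 1 * p := by
  intro p q hpq
  have key : (φ 1 - φ 0) * p ≤ (φ 1 - φ 0) * q := mul_le_mul_of_nonneg_left hpq (sub_nonneg.2 h)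
  linarith

theorem transformed_reward_monotone_two_state_general {A : Type*}
    (φ : A → Fin 2 → ℝ)
    (K : Matrix (Fin 2) (Fin 2) ℝ) (hK : K = !![1, -1; 0, 1])
    -- the constraint  φᵃᵀ K ≥ 0  componentwise, for all actions
    (hcon : ∀ a : A, ∀ j : Fin 2, 0 ≤ ∑ i, φ a i * K i j) :
    -- then the transformed reward  ρ̲(b,a) = φᵃᵀ b  is increasing in b(2) = p
    ∀ a : A, ∀ p q : ℝ, 0 ≤ p → p ≤ q → q ≤ 1 →
      φ a 0 * (1 - p) + φ a 1 * p ≤ φ a 0 * (1 - q) + φ a 1 * q := by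
  intro a p q _ hpq _
  have hcoeff : φ a 0 ≤ φ a 1 := by
    have h := hcon a 1
    rw [hK, sum_mul_bidiagonal_col_one] at h
    exact sub_nonneg.1 h
  exact monotone_linear_two_state hcoeff hpq

theorem transformed_reward_monotone_two_state {A : Type*}
    (γ : ℝ) (hγ0 : 0 ≤ γ) (hγ1 : γ < 1)
    (r : A → Fin 2 → ℝ) (g : Fin 2 → ℝ)
    (T : A → Fin 2 → Fin 2 → ℝ)
    (hT0 : ∀ a s' s, 0 ≤ T a s' s) (hT1 : ∀ a s, ∑ s', T a s' s = 1)
    -- the transformed reward coefficients  φᵃ = rₐ + (I - γ(Tᵃ)ᵀ)g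
    (φ : A → Fin 2 → ℝ)
    (hφ : ∀ a i, φ a i = r a i + g i - γ * ∑ j, T a j i * g j)
    (K : Matrix (Fin 2) (Fin 2) ℝ) (hK : K = !![1, -1; 0, 1])
    -- the constraint  φᵃᵀ K ≥ 0  componentwise, for all actions
    (hcon : ∀ a : A, ∀ j : Fin 2, 0 ≤ ∑ i, φ a i * K i j) :
    -- then the transformed reward  ρ̲(b,a) = φᵃᵀ b  is increasing in b(2) = p
    ∀ a : A, ∀ p q : ℝ, 0 ≤ p → p ≤ q → q ≤ 1 →
      φ a 0 * (1 - p) + φ a 1 * p ≤ φ a 0 * (1 - q) + φ a 1 * q :=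
  transformed_reward_monotone_two_state_general φ K hK hcon
end

section
/- If T and O are TP2 column-stochastic/row-stochastic matrices respectively (with O_{z,s} the probability of observation z in state s), then the Bayes posterior update b ↦ τ(b,z) with τ(b,z)(s') ∝ O_{z,s'}·(Tb)(s') preserves MLR dominance: b1 ≥_r b2 implies τ(b1,z) ≥_r τ(b2,z), whenever the normalizers are positive. -/
/-!
The prior enters the posterior only through `T b`, followed by the pointwise factor `O z ·` and a
positive normalization; the last two visibly preserve MLR dominance. For `T b` the key fact is
that `(a₁ ⬝ᵥ b₁)(a₂ ⬝ᵥ b₂) - (a₁ ⬝ᵥ b₂)(a₂ ⬝ᵥ b₁)` symmetrizes (Cauchy–Binet) to half the sum of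
`(a₁ s a₂ t - a₂ s a₁ t)(b₁ s b₂ t - b₂ s b₁ t)` over all `s, t`, and MLR dominance of both pairs
makes each term nonnegative; TP2 of `T` says exactly that its rows increase in the MLR order.
-/

/-- MLR dominance: b1 ≥_r b2 -/
def MLRge {S : ℕ} (b1 b2 : Fin S → ℝ) : Prop :=
  ∀ i j : Fin S, i < j → b1 i * b2 j ≤ b2 i * b1 j

open Matrix

theorem sum_sum_nonneg_of_add_swap_nonneg {ι : Type*} [Fintype ι] (g : ι → ι → ℝ)
    (h : ∀ s t, 0 ≤ g s t + g t s) : 0 ≤ ∑ s, ∑ t, g s t := by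
  have hswap : ∑ s, ∑ t, g t s = ∑ s, ∑ t, g s t := Finset.sum_comm
  have hsym : 0 ≤ ∑ s, ∑ t, (g s t + g t s) :=
    Finset.sum_nonneg fun s _ => Finset.sum_nonneg fun t _ => h s t
  simp only [Finset.sum_add_distrib] at hsym
  linarith

namespace MLRge

variable {S : ℕ} {b1 b2 : Fin S → ℝ}

theorem dotProduct_mul_dotProduct_le {a1 a2 : Fin S → ℝ} (ha : MLRge a1 a2) (hb : MLRge b1 b2) :
    (a1 ⬝ᵥ b2) * (a2 ⬝ᵥ b1) ≤ (a1 ⬝ᵥ b1) * (a2 ⬝ᵥ b2) := by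
  set g : Fin S → Fin S → ℝ := fun s t => a1 s * a2 t * (b1 s * b2 t - b2 s * b1 t)
  have hexpand : (a1 ⬝ᵥ b1) * (a2 ⬝ᵥ b2) - (a1 ⬝ᵥ b2) * (a2 ⬝ᵥ b1) = ∑ s, ∑ t, g s t := by
    simp only [dotProduct, Finset.sum_mul_sum, ← Finset.sum_sub_distrib]
    exact Finset.sum_congr rfl fun s _ => Finset.sum_congr rfl fun t _ => by ring
  have hpair : ∀ s t, g s t + g t s = (a1 s * a2 t - a2 s * a1 t) * (b1 s * b2 t - b2 s * b1 t) :=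
    fun s t => by ring
  have hlt : ∀ s t, s < t → 0 ≤ g s t + g t s := fun s t hst => by
    rw [hpair]
    exact mul_nonneg_of_nonpos_of_nonpos (sub_nonpos.2 (ha s t hst)) (sub_nonpos.2 (hb s t hst))
  have hnonneg : 0 ≤ ∑ s, ∑ t, g s t := by
    refine sum_sum_nonneg_of_add_swap_nonneg g fun s t => ?_
    rcases lt_trichotomy s t with hst | rfl | hts
    · exact hlt s t hst
    · rw [hpair, mul_comm (a1 s), sub_self, zero_mul]
    · rw [add_comm]
      exact hlt t s hts
  linarith

theorem mulVec {T : Matrix (Fin S) (Fin S) ℝ} (hT : ∀ i j, i < j → MLRge (T j) (T i))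
    (hb : MLRge b1 b2) : MLRge (T *ᵥ b1) (T *ᵥ b2) := fun i j hij => by
  have := (hT i j hij).dotProduct_mul_dotProduct_le hb
  simp only [Matrix.mulVec]
  linarith

theorem mul_left {c : Fin S → ℝ} (hc : ∀ i, 0 ≤ c i) (hb : MLRge b1 b2) :
    MLRge (fun i => c i * b1 i) (fun i => c i * b2 i) := fun i j hij => by
  have := mul_le_mul_of_nonneg_left (hb i j hij) (mul_nonneg (hc i) (hc j))
  linarith

theorem div_const {n1 n2 : ℝ} (hn : 0 ≤ n1 * n2) (hb : MLRge b1 b2) :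
    MLRge (fun i => b1 i / n1) (fun i => b2 i / n2) := fun i j hij => by
  rw [div_mul_div_comm, div_mul_div_comm, mul_comm n2 n1]
  exact div_le_div_of_nonneg_right (hb i j hij) hn

end MLRge

theorem bayes_update_preserves_mlr_general {S Z : ℕ}
    (T : Fin S → Fin S → ℝ) (O : Fin Z → Fin S → ℝ)
    (hTtp2 : ∀ i j k l : Fin S, i < j → k < l → T i l * T j k ≤ T i k * T j l)
    (hO0 : ∀ z s, 0 ≤ O z s)
    (b1 b2 : Fin S → ℝ)
    (hmlr : MLRge b1 b2)
    (z : Fin Z)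
    (hnorm1 : 0 < ∑ s', O z s' * ∑ s, T s' s * b1 s)
    (hnorm2 : 0 < ∑ s', O z s' * ∑ s, T s' s * b2 s) :
    MLRge
      (fun s' => O z s' * (∑ s, T s' s * b1 s) /
        ∑ t, O z t * ∑ s, T t s * b1 s)
      (fun s' => O z s' * (∑ s, T s' s * b2 s) /
        ∑ t, O z t * ∑ s, T t s * b2 s) := by
  have hrows : ∀ i j, i < j → MLRge (T j) (T i) :=
    fun i j hij k l hkl => (mul_comm _ _).trans_le (hTtp2 i j k l hij hkl)
  exact ((hmlr.mulVec hrows).mul_left (hO0 z)).div_const (mul_pos hnorm1 hnorm2).le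

theorem bayes_update_preserves_mlr {S Z : ℕ}
    (T : Fin S → Fin S → ℝ) (O : Fin Z → Fin S → ℝ)
    (hT0 : ∀ s' s, 0 ≤ T s' s) (hT1 : ∀ s, ∑ s', T s' s = 1)
    (hTtp2 : ∀ i j k l : Fin S, i < j → k < l → T i l * T j k ≤ T i k * T j l)
    (hO0 : ∀ z s, 0 ≤ O z s) (hO1 : ∀ s, ∑ z, O z s = 1)
    (hOtp2 : ∀ (z1 z2 : Fin Z) (s1 s2 : Fin S), z1 < z2 → s1 < s2 →
      O z1 s2 * O z2 s1 ≤ O z1 s1 * O z2 s2)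
    (b1 b2 : Fin S → ℝ)
    (hb10 : ∀ i, 0 ≤ b1 i) (hb20 : ∀ i, 0 ≤ b2 i)
    (hb11 : ∑ i, b1 i = 1) (hb21 : ∑ i, b2 i = 1)
    (hmlr : MLRge b1 b2)
    (z : Fin Z)
    (hnorm1 : 0 < ∑ s', O z s' * ∑ s, T s' s * b1 s)
    (hnorm2 : 0 < ∑ s', O z s' * ∑ s, T s' s * b2 s) :
    MLRge
      (fun s' => O z s' * (∑ s, T s' s * b1 s) /
        ∑ t, O z t * ∑ s, T t s * b1 s)
      (fun s' => O z s' * (∑ s, T s' s * b2 s) /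
        ∑ t, O z t * ∑ s, T t s * b2 s) :=
  bayes_update_preserves_mlr_general T O hTtp2 hO0 b1 b2 hmlr z hnorm1 hnorm2
end
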